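/- Let I=⟨A,∅,R,R?⟩ be an AtIAF, S⊆A a set of arguments, w∉A a fresh argument, and I'=⟨A, {w}, R, R?∪{(w,w)}⟩. Then NecVer_pr(I,S)=true if and only if w∈SRE⁺(I'−{(w,w)}, S, (pr,false)). -/
import Mathlib


universe u

/-- An abstract argumentation framework: a set of arguments with an attack relation. -/
structure AF (α : Type u) where
  args : Set α
  att : Set (α × α)

namespace AF

variable {α : Type u}

/-- `S⁺_F`: arguments attacked by `S`. -/
def plusSet (F : AF α) (S : Set α) : Set α := {a | a ∈ F.args ∧ ∃ b ∈ S, (b, a) ∈ F.att}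

/-- `S⁻_F`: arguments attacking `S`. -/
def minusSet (F : AF α) (S : Set α) : Set α := {a | a ∈ F.args ∧ ∃ b ∈ S, (a, b) ∈ F.att}

/-- `S` is conflict-free in `F`. -/
def confFree (F : AF α) (S : Set α) : Prop := S ∩ F.plusSet S = ∅

/-- `S` defends `a` in `F`: every attacker of `a` is attacked by `S`. -/
def defends (F : AF α) (S : Set α) (a : α) : Prop := ∀ b, (b, a) ∈ F.att → b ∈ F.plusSet S

/-- The characteristic function `Γ_F(S)`: arguments defended by `S`. -/
def Γ (F : AF α) (S : Set α) : Set α := {a | a ∈ F.args ∧ F.defends S a}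

/-- Admissible: conflict-free and self-defending. -/
def isAd (F : AF α) (S : Set α) : Prop := S ⊆ F.args ∧ F.confFree S ∧ S ⊆ F.Γ S

/-- Stable: conflict-free and attacking exactly the outside. -/
def isSt (F : AF α) (S : Set α) : Prop := S ⊆ F.args ∧ F.confFree S ∧ F.plusSet S = F.args \ S

/-- Complete: admissible and containing all defended arguments. -/
def isCo (F : AF α) (S : Set α) : Prop := F.isAd S ∧ F.Γ S ⊆ S

/-- Grounded: ⊆-minimal complete. -/
def isGr (F : AF α) (S : Set α) : Prop := F.isCo S ∧ ∀ T, F.isCo T → T ⊆ S → T = S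

/-- Preferred: ⊆-maximal admissible. -/
def isPr (F : AF α) (S : Set α) : Prop := F.isAd S ∧ ∀ T, F.isAd T → S ⊆ T → S = T

end AF

/-- The five common semantics. -/
inductive Sem : Type
  | ad | st | co | gr | pr
deriving DecidableEq

/-- `S` is a `σ`-extension of `F`. -/
def extOf {α : Type u} : Sem → AF α → Set α → Prop
  | .ad => AF.isAd
  | .st => AF.isSt
  | .co => AF.isCo
  | .gr => AF.isGr
  | .pr => AF.isPr

/-- An incomplete argumentation framework (data part). -/
structure IAF (α : Type u) where
  A : Set α
  Aq : Set α
  R : Set (α × α)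
  Rq : Set (α × α)

namespace IAF

variable {α : Type u}

/-- Well-formedness: `A`,`A?` disjoint; `R`,`R?` disjoint subsets of `(A∪A?)×(A∪A?)`. -/
def WF (I : IAF α) : Prop :=
  Disjoint I.A I.Aq ∧ Disjoint I.R I.Rq ∧
  I.R ⊆ (I.A ∪ I.Aq) ×ˢ (I.A ∪ I.Aq) ∧
  I.Rq ⊆ (I.A ∪ I.Aq) ×ˢ (I.A ∪ I.Aq)

/-- `cert(I)`: the AF projected on the certain part. -/
def cert (I : IAF α) : AF α := ⟨I.A, I.R ∩ I.A ×ˢ I.A⟩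

/-- `I'` is a partial completion of `I`. -/
def PartOf (I' I : IAF α) : Prop :=
  I'.WF ∧ I.A ⊆ I'.A ∧ I'.A ⊆ I.A ∪ I.Aq ∧
  I.R ∩ (I'.A ∪ I'.Aq) ×ˢ (I'.A ∪ I'.Aq) ⊆ I'.R ∧
  I'.R ⊆ I.R ∪ I.Rq ∧ I'.Aq ⊆ I.Aq ∧ I'.Rq ⊆ I.Rq

/-- `F` is a completion of `I`. -/
def IsCompletion (I : IAF α) (F : AF α) : Prop := ∃ I' : IAF α, I'.PartOf I ∧ F = I'.cert

/-- `I + R₀` for a set of uncertain attacks. -/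
def addR (I : IAF α) (R0 : Set (α × α)) : IAF α := ⟨I.A, I.Aq, I.R ∪ R0, I.Rq \ R0⟩

/-- `I − R₀` for a set of uncertain attacks. -/
def subR (I : IAF α) (R0 : Set (α × α)) : IAF α := ⟨I.A, I.Aq, I.R, I.Rq \ R0⟩

/-- `I + A₀` for a set of uncertain arguments. -/
def addA (I : IAF α) (A0 : Set α) : IAF α := ⟨I.A ∪ A0, I.Aq \ A0, I.R, I.Rq⟩

/-- `I − A₀` for a set of uncertain arguments. -/
def subA (I : IAF α) (A0 : Set α) : IAF α :=
  ⟨I.A, I.Aq \ A0,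
   I.R \ {p | p ∈ I.R ∪ I.Rq ∧ (p.1 ∈ A0 ∨ p.2 ∈ A0)},
   I.Rq \ {p | p ∈ I.R ∪ I.Rq ∧ (p.1 ∈ A0 ∨ p.2 ∈ A0)}⟩

/-- `S⁺_I`. -/
def plusI (I : IAF α) (S : Set α) : Set α := {a | a ∈ I.A ∪ I.Aq ∧ ∃ b ∈ S, (b, a) ∈ I.R}

/-- `S⁻_I`. -/
def minusI (I : IAF α) (S : Set α) : Set α := {a | a ∈ I.A ∪ I.Aq ∧ ∃ b ∈ S, (a, b) ∈ I.R}

/-- `S^∼_I`. -/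
def simI (I : IAF α) (S : Set α) : Set α :=
  {a | a ∈ I.A ∪ I.Aq ∧ ∀ b ∈ S, (b, a) ∉ I.R ∪ I.Rq}

end IAF

/-- An element of an IAF: either an argument or an attack. -/
inductive Elem (α : Type u) : Type u
  | arg (a : α)
  | att (r : α × α)

/-- `e` is an uncertain element of `I`, i.e. `e ∈ A? ∪ R?`. -/
def IAF.isUnc {α : Type u} (I : IAF α) : Elem α → Prop
  | .arg a => a ∈ I.Aq
  | .att r => r ∈ I.Rq

/-- `I + {e}`. -/
def IAF.addE {α : Type u} (I : IAF α) : Elem α → IAF α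
  | .arg a => I.addA {a}
  | .att r => I.addR {r}

/-- `I − {e}`. -/
def IAF.subE {α : Type u} (I : IAF α) : Elem α → IAF α
  | .arg a => I.subA {a}
  | .att r => I.subR {r}

/-- `e` is the unique uncertain element of `I`, i.e. `A? ∪ R? = {e}`. -/
def onlyUnc {α : Type u} (I : IAF α) : Elem α → Prop
  | .arg a => I.Aq = {a} ∧ I.Rq = ∅
  | .att r => I.Aq = ∅ ∧ I.Rq = {r}

/-- A verification status: a semantics together with true/false. -/
abbrev VStatus := Sem × Bool

/-- `S` has verification status `j` in the AF `F`. -/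
def hasStatus {α : Type u} (F : AF α) (S : Set α) (j : VStatus) : Prop :=
  cond j.2 (extOf j.1 F S) (¬ extOf j.1 F S)

/-- `S` is stable-`j` w.r.t. `I`. -/
def IAF.stableJ {α : Type u} (I : IAF α) (S : Set α) (j : VStatus) : Prop :=
  ∀ F, I.IsCompletion F → hasStatus F S j

/-- `S` is stable-`σ` w.r.t. `I`. -/
def IAF.stableSem {α : Type u} (I : IAF α) (S : Set α) (σ : Sem) : Prop :=
  I.stableJ S (σ, true) ∨ I.stableJ S (σ, false)

/-- `RE⁺(I,S,j)`: uncertain elements whose addition is `j`-relevant for `S` w.r.t. `I`. -/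
def REplus {α : Type u} (I : IAF α) (S : Set α) (j : VStatus) : Set (Elem α) :=
  {e | I.isUnc e ∧ ∃ I' : IAF α, I'.PartOf I ∧ onlyUnc I' e ∧
    hasStatus (I'.addE e).cert S j ∧ ¬ hasStatus (I'.subE e).cert S j}

/-- `RE⁻(I,S,j)`: uncertain elements whose removal is `j`-relevant for `S` w.r.t. `I`. -/
def REminus {α : Type u} (I : IAF α) (S : Set α) (j : VStatus) : Set (Elem α) :=
  {e | I.isUnc e ∧ ∃ I' : IAF α, I'.PartOf I ∧ onlyUnc I' e ∧
    hasStatus (I'.subE e).cert S j ∧ ¬ hasStatus (I'.addE e).cert S j}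

/-- `e` is `σ`-irrelevant for `S` w.r.t. `I`. -/
def irrelevant {α : Type u} (I : IAF α) (S : Set α) (σ : Sem) (e : Elem α) : Prop :=
  e ∉ REplus I S (σ, true) ∧ e ∉ REminus I S (σ, true) ∧
  e ∉ REplus I S (σ, false) ∧ e ∉ REminus I S (σ, false)

/-- `PosVer_σ(I,S) = true`. -/
def PosVer {α : Type u} (σ : Sem) (I : IAF α) (S : Set α) : Prop :=
  ∃ F, I.IsCompletion F ∧ extOf σ F S

/-- `NecVer_σ(I,S) = true`. -/
def NecVer {α : Type u} (σ : Sem) (I : IAF α) (S : Set α) : Prop :=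
  ∀ F, I.IsCompletion F → extOf σ F S

/-- `SRE⁺(I,S,j)`: uncertain elements whose addition is strongly `j`-relevant. -/
def SREplus {α : Type u} (I : IAF α) (S : Set α) (j : VStatus) : Set (Elem α) :=
  {e | I.isUnc e ∧ ∀ I' : IAF α, I'.PartOf (I.subE e) → ¬ I'.stableJ S j}

/-- `SRE⁻(I,S,j)`: uncertain elements whose removal is strongly `j`-relevant. -/
def SREminus {α : Type u} (I : IAF α) (S : Set α) (j : VStatus) : Set (Elem α) :=
  {e | I.isUnc e ∧ ∀ I' : IAF α, I'.PartOf (I.addE e) → ¬ I'.stableJ S j}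

/-- The `OutRel(I,S,(a,b))` predicate. -/
def OutRel {α : Type u} (I : IAF α) (S : Set α) (r : α × α) : Prop :=
  (I.minusI {r.2} \ {r.1}) ∩ I.simI S = ∅ ∧
  PosVer Sem.co
    ((I.addR {p | p ∈ I.Rq ∧ p.1 ∈ S ∧ p.2 ∈ I.minusI {r.2} \ {r.1}}).subR
      {p | p ∈ I.Rq ∧ p.1 ≠ r.1 ∧ p.2 = r.2}) S



section Aux

variable {α : Type u}

lemma partOf_refl {I : IAF α} (h : I.WF) : I.PartOf I :=
  ⟨h, le_refl _, Set.subset_union_left, Set.inter_subset_left,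
    Set.subset_union_left, le_refl _, le_refl _⟩

lemma partOf_trans {L J I : IAF α} (hLJ : L.PartOf J) (hJI : J.PartOf I) :
    L.PartOf I := by
  obtain ⟨hW, h1, h2, h3, h4, h5, h6⟩ := hLJ
  obtain ⟨hW', g1, g2, g3, g4, g5, g6⟩ := hJI
  refine ⟨hW, g1.trans h1, ?_, ?_, ?_, h5.trans g5, h6.trans g6⟩
  · exact h2.trans (Set.union_subset g2 (g5.trans Set.subset_union_right))
  · intro p hp
    apply h3
    refine ⟨?_, hp.2⟩
    apply g3
    refine ⟨hp.1, ?_⟩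
    have hsub : L.A ∪ L.Aq ⊆ J.A ∪ J.Aq :=
      Set.union_subset h2 (h5.trans Set.subset_union_right)
    exact Set.prod_mono hsub hsub hp.2
  · exact h4.trans (Set.union_subset g4 (g6.trans Set.subset_union_right))

lemma cert_selfCompletion {I : IAF α} (h : I.WF) : I.IsCompletion I.cert :=
  ⟨I, partOf_refl h, rfl⟩

/-- From a completion F of I, the IAF ⟨F.args, ∅, F.att, ∅⟩ is a partial
completion of I whose unique completion is F. -/
lemma completion_as_partial {I : IAF α} {F : AF α} (h : I.IsCompletion F) :
    ∃ K : IAF α, K.PartOf I ∧ ∀ G, K.IsCompletion G → G = F := by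
  obtain ⟨J, hJ, rfl⟩ := h
  obtain ⟨hW, h1, h2, h3, h4, h5, h6⟩ := hJ
  refine ⟨⟨J.A, ∅, J.R ∩ J.A ×ˢ J.A, ∅⟩, ⟨?_, h1, ?_, ?_, ?_, ?_, ?_⟩, ?_⟩
  · refine ⟨by simp, by simp, ?_, by simp⟩
    intro p hp
    simpa using hp.2
  · exact h2.trans (by simp)
  · intro p hp
    simp only [Set.union_empty] at hp
    refine ⟨h3 ⟨hp.1, Set.prod_mono Set.subset_union_left
      Set.subset_union_left hp.2⟩, hp.2⟩
  · exact (Set.inter_subset_left).trans h4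
  · simp
  · simp
  · rintro G ⟨L, ⟨_, g1, g2, g3, g4, g5, g6⟩, rfl⟩
    have hAq : L.Aq = ∅ := Set.subset_eq_empty g5 rfl
    have hA : L.A = J.A := Set.Subset.antisymm (by simpa [hAq] using g2) g1
    have hR : L.R = J.R ∩ J.A ×ˢ J.A := by
      apply Set.Subset.antisymm
      · simpa using g4
      · intro p hp
        exact g3 ⟨hp, by simpa [hA, hAq] using hp.2⟩
    simp [IAF.cert, hA, hAq, hR, Set.inter_assoc]

lemma not_stableJ_pr_false {I : IAF α} {S : Set α}
    (h : ¬ I.stableJ S (Sem.pr, false)) :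
    ∃ F, I.IsCompletion F ∧ extOf Sem.pr F S := by
  simp only [IAF.stableJ, hasStatus, cond] at h
  push_neg at h
  exact h

end Aux

/-- reduction from `NecVer_pr` to strong `(pr,false)`-relevance of addition. -/
theorem stmt14 {α : Type u} (I : IAF α) (S : Set α) (w : α)
    (hWF : I.WF) (hAt : I.Aq = ∅) (hS : S ⊆ I.A)
    (hw : w ∉ I.A)
    (I' : IAF α)
    (hI' : I' = ⟨I.A, {w}, I.R, I.Rq ∪ {(w, w)}⟩) :
    NecVer Sem.pr I S ↔
      Elem.arg w ∈ SREplus (I'.subR {(w, w)}) S (Sem.pr, false) := by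
  subst hI'
  have hwA : w ∉ I.A ∪ I.Aq := by simp [hAt, hw]
  have hRsub : I.R ⊆ (I.A ∪ I.Aq) ×ˢ (I.A ∪ I.Aq) := hWF.2.2.1
  have hRqsub : I.Rq ⊆ (I.A ∪ I.Aq) ×ˢ (I.A ∪ I.Aq) := hWF.2.2.2
  have hwwR : (w, w) ∉ I.R := fun h => hwA (hRsub h).1
  have hwwRq : (w, w) ∉ I.Rq := fun h => hwA (hRqsub h).1
  -- the subtracted IAF equals I
  have hkey : ((⟨I.A, {w}, I.R, I.Rq ∪ {(w, w)}⟩ : IAF α).subR {(w, w)}).subE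
      (Elem.arg w) = I := by
    obtain ⟨A, Aq, R, Rq⟩ := I
    simp only [IAF.Aq] at hAt
    subst hAt
    simp only [IAF.subE, IAF.subR, IAF.subA, IAF.mk.injEq]
    have hRq' : (Rq ∪ {(w, w)}) \ {(w, w)} = Rq := by
      rw [Set.union_diff_distrib, Set.diff_self, Set.union_empty,
        Set.diff_singleton_eq_self hwwRq]
    refine ⟨trivial, by simp, ?_, ?_⟩
    · ext p
      simp only [Set.mem_diff, Set.mem_setOf_eq, and_iff_left_iff_imp]
      rintro hp1 ⟨-, h | h⟩ <;>
        [exact hwA (by rw [← h]; exact (hRsub hp1).1);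
         exact hwA (by rw [← h]; exact (hRsub hp1).2)]
    · rw [hRq']
      ext p
      simp only [Set.mem_diff, Set.mem_setOf_eq, and_iff_left_iff_imp]
      rintro hp1 ⟨-, h | h⟩ <;>
        [exact hwA (by rw [← h]; exact (hRqsub hp1).1);
         exact hwA (by rw [← h]; exact (hRqsub hp1).2)]
  constructor
  · intro hNec
    refine ⟨by simp [IAF.isUnc, IAF.subR], ?_⟩
    rw [hkey]
    intro I2 hI2 hstab
    have hc : I2.IsCompletion I2.cert := cert_selfCompletion hI2.1
    have hcI : I.IsCompletion I2.cert := by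
      obtain ⟨L, hL, hLe⟩ := hc
      exact ⟨L, partOf_trans hL hI2, hLe⟩
    have := hstab I2.cert hc
    simp only [hasStatus, cond] at this
    exact this (hNec I2.cert hcI)
  · rintro ⟨-, hrel⟩ F hF
    rw [hkey] at hrel
    obtain ⟨K, hKI, huniq⟩ := completion_as_partial hF
    have := hrel K hKI
    obtain ⟨F', hF', hpr⟩ := not_stableJ_pr_false this
    rwa [huniq F' hF'] at hpr
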